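/- (One-dimensional OLCT sampling theorem in the transform domain) Let A = (a,b,c,d,τ,η) with ad − bc = 1, b > 0. Suppose f ∈ L²(ℝ) is supported in [−B/2, B/2] and let F^A(u) = ∫ f(t) h_A(t,u) dt be its OLCT. Then for any sampling interval Δ ≤ 2πb/B, F^A is determined by its samples F^A(nΔ), n ∈ ℤ, via F^A(u) = e^{(i/(2b))(d u² − 2u(dτ − bη))} ∑_{n∈ℤ} F^A(nΔ) · sinc(u/Δ − n) · e^{−(i/(2b))(d(nΔ)² − 2nΔ(dτ − bη))}, where sinc(x) = sin(πx)/(πx) (with sinc(0)=1), and the series converges in L² on compact sets. -/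

import Mathlib

/-!
After removing the output chirp, the OLCT of `f` is the Fourier transform of the signal `g`
obtained by multiplying `f` with an input chirp, evaluated at `u / (2πb)`; `g` is still
supported in `[-B/2, B/2]`, hence in `[-T/2, T/2]` with `T = 2πb/Δ`. On the circle `ℝ/Tℤ`, the
Fourier coefficients of `g` are `T⁻¹ 𝓕 g (n/T)` and those of the pure frequency `x ↦ e^{2πiξx}`
are `sinc (Tξ - n)`, so Parseval's identity for their inner product is Shannon's series
`𝓕 g ξ = ∑ₙ sinc (Tξ - n) 𝓕 g (n/T)`.
-/

open Complex Real MeasureTheory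

/-- One-dimensional OLCT kernel with `b > 0`. -/
noncomputable def olctKernel1D (a b d τ η : ℝ) (t u : ℝ) : ℂ :=
  ((2 * (Real.pi : ℂ) * Complex.I * (b : ℂ)) ^ ((2 : ℂ)⁻¹))⁻¹ *
    Complex.exp (Complex.I * ((d * τ ^ 2 / (2 * b) : ℝ) : ℂ)) *
    Complex.exp (Complex.I *
      (((a / (2 * b)) * t ^ 2 + (1 / b) * t * (τ - u) - (1 / b) * u * (d * τ - b * η)
        + (d / (2 * b)) * u ^ 2 : ℝ) : ℂ))

/-- Normalized sinc, `sinc x = sin(πx)/(πx)` with `sinc 0 = 1`. -/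
noncomputable def sinc (x : ℝ) : ℝ :=
  if x = 0 then 1 else Real.sin (Real.pi * x) / (Real.pi * x)

open scoped ComplexConjugate FourierTransform

theorem integral_cexp_two_pi_mul_I_eq_mul_sinc {T : ℝ} (hT : 0 < T) (ξ : ℝ) :
    ∫ x in -(T / 2)..T / 2, cexp (2 * π * ξ * I * x) = T * _root_.sinc (T * ξ) := by
  rcases eq_or_ne ξ 0 with rfl | hξ
  · simp [_root_.sinc]
  have hc : 2 * π * ξ * I ≠ 0 := by simp [hξ, pi_ne_zero]
  rw [integral_exp_mul_complex hc, _root_.sinc, if_neg (mul_ne_zero hT.ne' hξ)]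
  have hθ : 2 * π * ξ * I * (T / 2 : ℝ) = (π * (T * ξ) : ℝ) * I := by push_cast; ring
  have hθ' : 2 * π * ξ * I * (-(T / 2) : ℝ) = -(π * (T * ξ) : ℝ) * I := by push_cast; ring
  rw [hθ, hθ', exp_mul_I, exp_mul_I, Complex.cos_neg, Complex.sin_neg, ← ofReal_sin]
  have hT' : (T : ℂ) ≠ 0 := by exact_mod_cast hT.ne'
  have hξ' : (ξ : ℂ) ≠ 0 := by exact_mod_cast hξ
  have hπ : (π : ℂ) ≠ 0 := by exact_mod_cast pi_ne_zero
  push_cast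
  field_simp
  ring

theorem fourierCoeffOn_cexp_two_pi_mul_I {T : ℝ} (hT : 0 < T) (ξ : ℝ) (n : ℤ) :
    fourierCoeffOn (neg_lt_self (half_pos hT)) (fun x ↦ cexp (2 * π * ξ * I * x)) n =
      _root_.sinc (T * ξ - n) := by
  have hT' : (T : ℂ) ≠ 0 := by exact_mod_cast hT.ne'
  rw [fourierCoeffOn_eq_integral, sub_neg_eq_add, add_halves]
  simp_rw [fourier_coe_apply, smul_eq_mul, ← Complex.exp_add]
  have hfreq : ∀ x : ℝ, 2 * π * I * ((-n : ℤ) : ℂ) * x / T + 2 * π * ξ * I * x =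
      2 * π * ((ξ - n / T : ℝ) : ℂ) * I * x := by
    intro x; push_cast; field_simp; ring
  simp_rw [hfreq]
  rw [integral_cexp_two_pi_mul_I_eq_mul_sinc hT, mul_sub, mul_div_cancel₀ _ hT.ne',
    real_smul, ← mul_assoc, ← ofReal_mul, one_div_mul_cancel hT.ne', ofReal_one, one_mul]

theorem fourier_eq_intervalIntegral_of_support_subset {T : ℝ} (hT : 0 ≤ T) {g : ℝ → ℂ}
    (hg : ∀ x ∉ Set.Icc (-(T / 2)) (T / 2), g x = 0) (w : ℝ) :
    𝓕 g w = ∫ x in -(T / 2)..T / 2, cexp (↑(-2 * π * x * w) * I) * g x := by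
  rw [fourier_real_eq_integral_exp_smul, intervalIntegral.integral_of_le (by linarith),
    ← integral_Icc_eq_integral_Ioc, setIntegral_eq_integral_of_forall_compl_eq_zero]
  · rfl
  · intro x hx
    rw [hg x hx, mul_zero]

theorem fourierCoeffOn_eq_inv_mul_fourier {T : ℝ} (hT : 0 < T) {g : ℝ → ℂ}
    (hg : ∀ x ∉ Set.Icc (-(T / 2)) (T / 2), g x = 0) (n : ℤ) :
    fourierCoeffOn (neg_lt_self (half_pos hT)) g n = T⁻¹ * 𝓕 g (n / T) := by
  rw [fourierCoeffOn_eq_integral, sub_neg_eq_add, add_halves,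
    fourier_eq_intervalIntegral_of_support_subset hT.le hg, one_div, real_smul, ofReal_inv]
  congr 1
  refine intervalIntegral.integral_congr fun x _ ↦ ?_
  simp only [fourier_coe_apply, smul_eq_mul]
  congr 2
  push_cast
  field_simp

theorem hasSum_conj_fourierCoeffOn_mul {a b : ℝ} (hab : a < b) {f g : ℝ → ℂ}
    (hf : MemLp f 2 (volume.restrict (Set.Ioc a b)))
    (hg : MemLp g 2 (volume.restrict (Set.Ioc a b))) :
    HasSum (fun n ↦ conj (fourierCoeffOn hab f n) * fourierCoeffOn hab g n)
      ((b - a)⁻¹ • ∫ x in a..b, conj (f x) * g x) := by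
  have := Fact.mk (sub_pos.mpr hab)
  rw [← add_sub_cancel a b] at hf hg
  have hf' := hf.memLp_liftIoc.haarAddCircle
  have hg' := hg.memLp_liftIoc.haarAddCircle
  have hcoeff (n : ℤ) :
      inner ℂ (hf'.toLp _) (fourierBasis n) * inner ℂ (fourierBasis n) (hg'.toLp _) =
        conj (fourierCoeffOn hab f n) * fourierCoeffOn hab g n := by
    rw [← inner_conj_symm, ← fourierBasis.repr_apply_apply, ← fourierBasis.repr_apply_apply,
      fourierBasis_repr, fourierBasis_repr, fourierCoeff_congr_ae hf'.coeFn_toLp,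
      fourierCoeff_congr_ae hg'.coeFn_toLp, fourierCoeff_liftIoc_eq, fourierCoeff_liftIoc_eq]
    simp only [add_sub_cancel]
  have hinner : inner ℂ (hf'.toLp _) (hg'.toLp _) =
      (b - a)⁻¹ • ∫ x in a..b, conj (f x) * g x := calc
    _ = ∫ z, AddCircle.liftIoc (b - a) a (fun x ↦ conj (f x) * g x) z
          ∂AddCircle.haarAddCircle := by
      rw [L2.inner_def]
      refine integral_congr_ae ?_
      filter_upwards [hf'.coeFn_toLp, hg'.coeFn_toLp] with z hfz hgz
      rw [hfz, hgz, RCLike.inner_apply, mul_comm]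
      rfl
    _ = _ := by
      rw [AddCircle.integral_haarAddCircle, AddCircle.integral_liftIoc_eq_intervalIntegral,
        add_sub_cancel]
  simpa only [hcoeff, hinner] using fourierBasis.hasSum_inner_mul_inner hf'.toLp hg'.toLp

theorem hasSum_sinc_mul_fourier {T : ℝ} (hT : 0 < T) {g : ℝ → ℂ} (hg : MemLp g 2)
    (hsupp : ∀ x ∉ Set.Icc (-(T / 2)) (T / 2), g x = 0) (ξ : ℝ) :
    HasSum (fun n : ℤ ↦ _root_.sinc (T * ξ - n) * 𝓕 g (n / T)) (𝓕 g ξ) := by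
  have he : MemLp (fun x : ℝ ↦ cexp (2 * π * ξ * I * x)) 2
      (volume.restrict (Set.Ioc (-(T / 2)) (T / 2))) :=
    .of_bound (by fun_prop) 1 (.of_forall fun x ↦ by
      rw [show 2 * π * ξ * I * x = ((2 * π * ξ * x : ℝ) : ℂ) * I by push_cast; ring,
        norm_exp_ofReal_mul_I])
  have hconj (x : ℝ) : conj (cexp (2 * π * ξ * I * x)) = cexp (↑(-2 * π * x * ξ) * I) := by
    rw [← exp_conj]
    congr 1
    simp only [map_mul, conj_ofReal, conj_I, map_ofNat]
    push_cast
    ring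
  have hsum := hasSum_conj_fourierCoeffOn_mul (neg_lt_self (half_pos hT)) he (hg.restrict _)
  simp only [fourierCoeffOn_cexp_two_pi_mul_I hT, fourierCoeffOn_eq_inv_mul_fourier hT hsupp,
    conj_ofReal, sub_neg_eq_add, add_halves, hconj,
    ← fourier_eq_intervalIntegral_of_support_subset hT.le hsupp] at hsum
  have hT' : (T : ℂ) ≠ 0 := by exact_mod_cast hT.ne'
  have h := hsum.mul_left (T : ℂ)
  simpa only [real_smul, ofReal_inv, mul_left_comm (T : ℂ), mul_inv_cancel_left₀ hT',
    inv_mul_cancel_left₀ hT'] using h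

noncomputable def olctOutputChirp (b d τ η u : ℝ) : ℂ :=
  cexp ((I / (2 * b)) * ((d * u ^ 2 - 2 * u * (d * τ - b * η) : ℝ) : ℂ))

noncomputable def olctInputChirp (a b d τ t : ℝ) : ℂ :=
  ((2 * (π : ℂ) * I * b) ^ (2 : ℂ)⁻¹)⁻¹ * cexp (I * ((d * τ ^ 2 / (2 * b) : ℝ) : ℂ)) *
    cexp (I * ((a / (2 * b) * t ^ 2 + t * τ / b : ℝ) : ℂ))

theorem olctKernel1D_eq (a b d τ η t u : ℝ) :
    olctKernel1D a b d τ η t u = olctOutputChirp b d τ η u * olctInputChirp a b d τ t *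
      cexp (↑(-2 * π * t * (u / (2 * π * b))) * I) := by
  have hphase : I * ((a / (2 * b) * t ^ 2 + 1 / b * t * (τ - u) - 1 / b * u * (d * τ - b * η)
      + d / (2 * b) * u ^ 2 : ℝ) : ℂ) =
        I / (2 * b) * ((d * u ^ 2 - 2 * u * (d * τ - b * η) : ℝ) : ℂ)
          + I * ((a / (2 * b) * t ^ 2 + t * τ / b : ℝ) : ℂ)
          + ↑(-2 * π * t * (u / (2 * π * b))) * I := by
    have : (π : ℂ) ≠ 0 := by exact_mod_cast pi_ne_zero
    push_cast
    field_simp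
    ring
  simp only [olctKernel1D, olctOutputChirp, olctInputChirp, hphase, Complex.exp_add]
  ring

theorem norm_olctInputChirp (a b d τ t : ℝ) :
    ‖olctInputChirp a b d τ t‖ = ‖((2 * (π : ℂ) * I * b) ^ (2 : ℂ)⁻¹)⁻¹‖ := by
  simp only [olctInputChirp, norm_mul, mul_comm I, norm_exp_ofReal_mul_I, mul_one]

theorem integral_mul_olctKernel1D (a b d τ η : ℝ) (f : ℝ → ℂ) (u : ℝ) :
    ∫ t, f t * olctKernel1D a b d τ η t u =
      olctOutputChirp b d τ η u *
        𝓕 (fun t ↦ olctInputChirp a b d τ t * f t) (u / (2 * π * b)) := by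
  rw [fourier_real_eq_integral_exp_smul, ← integral_const_mul]
  congr 1 with t
  rw [olctKernel1D_eq, smul_eq_mul]
  ring

theorem memLp_olctInputChirp_mul (a b d τ : ℝ) {p : ENNReal} {f : ℝ → ℂ} (hf : MemLp f p) :
    MemLp (fun t ↦ olctInputChirp a b d τ t * f t) p := by
  have hcont : Continuous (olctInputChirp a b d τ) := by unfold olctInputChirp; fun_prop
  refine hf.of_le_mul (c := ‖((2 * (π : ℂ) * I * b) ^ (2 : ℂ)⁻¹)⁻¹‖)
    (hcont.aestronglyMeasurable.mul hf.1) (.of_forall fun t ↦ ?_)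
  rw [norm_mul, norm_olctInputChirp]

theorem stmt10_general (a b d τ η B Δ : ℝ) (hb : 0 < b)
    (hB : 0 < B) (hΔ : 0 < Δ) (hΔ2 : Δ ≤ 2 * Real.pi * b / B)
    (f : ℝ → ℂ) (hfL2 : MemLp f 2 (volume : Measure ℝ))
    (hsupp : ∀ t : ℝ, t ∉ Set.Icc (-B / 2) (B / 2) → f t = 0)
    (F : ℝ → ℂ) (hF : ∀ u : ℝ, F u = ∫ t : ℝ, f t * olctKernel1D a b d τ η t u) :
    ∀ u : ℝ,
      F u = Complex.exp ((Complex.I / (2 * b)) *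
              ((d * u ^ 2 - 2 * u * (d * τ - b * η) : ℝ) : ℂ)) *
        ∑' n : ℤ, F (n * Δ) * (_root_.sinc (u / Δ - n) : ℂ) *
          Complex.exp (-((Complex.I / (2 * b)) *
            ((d * (n * Δ) ^ 2 - 2 * (n * Δ) * (d * τ - b * η) : ℝ) : ℂ))) := by
  intro u
  set T := 2 * π * b / Δ
  have hT : 0 < T := by positivity
  have hBT : B ≤ T := by rwa [le_div_iff₀ hΔ, mul_comm, ← le_div_iff₀ hB]
  have hgsupp : ∀ t ∉ Set.Icc (-(T / 2)) (T / 2), olctInputChirp a b d τ t * f t = 0 := by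
    intro t ht
    rw [hsupp t fun h ↦ ht ⟨by linarith [h.1], by linarith [h.2]⟩, mul_zero]
  have hFg (v : ℝ) : F v = olctOutputChirp b d τ η v *
      𝓕 (fun t ↦ olctInputChirp a b d τ t * f t) (v / (2 * π * b)) :=
    (hF v).trans (integral_mul_olctKernel1D a b d τ η f v)
  have hsampling := hasSum_sinc_mul_fourier hT (memLp_olctInputChirp_mul a b d τ hfL2) hgsupp
    (u / (2 * π * b))
  rw [hFg u, ← hsampling.tsum_eq]
  congr 1
  refine tsum_congr fun n ↦ ?_
  have hπ : π ≠ 0 := pi_ne_zero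
  have hξ : T * (u / (2 * π * b)) = u / Δ := by simp only [T]; field_simp
  have hn : (n : ℝ) / T = n * Δ / (2 * π * b) := by simp only [T]; field_simp
  rw [hξ, hn, hFg, olctOutputChirp, Complex.exp_neg]
  field_simp

/-- Stern's sampling theorem for the OLCT of a time-limited signal:
if `f ∈ L²` is supported in `[-B/2, B/2]` and `Δ ≤ 2πb/B`, then the OLCT `F^A` is
reconstructed from its samples `F^A(nΔ)` by a chirp-modulated Shannon series. -/
theorem stmt10 (a b c d τ η B Δ : ℝ) (hdet : a * d - b * c = 1) (hb : 0 < b)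
    (hB : 0 < B) (hΔ : 0 < Δ) (hΔ2 : Δ ≤ 2 * Real.pi * b / B)
    (f : ℝ → ℂ) (hfL2 : MemLp f 2 (volume : Measure ℝ))
    (hsupp : ∀ t : ℝ, t ∉ Set.Icc (-B / 2) (B / 2) → f t = 0)
    (F : ℝ → ℂ) (hF : ∀ u : ℝ, F u = ∫ t : ℝ, f t * olctKernel1D a b d τ η t u) :
    ∀ u : ℝ,
      F u = Complex.exp ((Complex.I / (2 * b)) *
              ((d * u ^ 2 - 2 * u * (d * τ - b * η) : ℝ) : ℂ)) *
        ∑' n : ℤ, F (n * Δ) * (_root_.sinc (u / Δ - n) : ℂ) *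
          Complex.exp (-((Complex.I / (2 * b)) *
            ((d * (n * Δ) ^ 2 - 2 * (n * Δ) * (d * τ - b * η) : ℝ) : ℂ))) :=
  stmt10_general a b d τ η B Δ hb hB hΔ hΔ2 f hfL2 hsupp F hF
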